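/- Soundness of the assignment rule with respect to concrete semantics: if a concrete state σ (a function from variables to objects with a current object) is abstracted by alias diagram G (meaning for every variable v, σ(v) ∈ V_G(v)), then the state after executing t := s (i.e., σ[t ↦ σ(s)]) is abstracted by the diagram relink t : V_G(s). -/
import Mathlib

def step {T O : Type} (S : T → O → Set O) (X : Set O) (a : T) : Set O :=
  {o' | ∃ o ∈ X, o' ∈ S a o}

def V {T O : Type} (R : Set O) (S : T → O → Set O) (p : List T) : Set O :=
  p.foldl (step S) R

def aliasSet {T O : Type} (E : Set (List T)) (R : Set O) (S : T → O → Set O)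
    (p : List T) : Set (List T) :=
  {q ∈ E | (V R S p ∩ V R S q).Nonempty}

def relink {T O : Type} (S : T → O → Set O) (R : Set O) (t : T) (X : Set O) :
    T → O → Set O :=
  fun a o => {o' | (a = t ∧ o ∈ R ∧ o' ∈ X) ∨ ((a ≠ t ∨ o ∉ R) ∧ o' ∈ S a o)}

/-- Soundness of the assignment rule: if the concrete state `σ` is abstracted by
the diagram (every variable's value lies in its value set), then the state after
`t := s`, i.e. `σ[t ↦ σ s]`, is abstracted by `relink t : V(s)`. -/
theorem assignment_rule_sound {T O : Type} [DecidableEq T]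
    (R : Set O) (hR : R.Nonempty) (S : T → O → Set O)
    (σ : T → O) (habs : ∀ v : T, σ v ∈ V R S [v]) (t s : T) :
    ∀ v : T, Function.update σ t (σ s) v ∈ V R (relink S R t (V R S [s])) [v] := by
  intro v
  by_cases h : v = t
  · subst h
    obtain ⟨o, ho⟩ := hR
    simp only [Function.update_self]
    exact ⟨o, ho, Or.inl ⟨rfl, ho, habs s⟩⟩
  · rw [Function.update_of_ne h]
    obtain ⟨o, ho, hs⟩ := habs v
    exact ⟨o, ho, Or.inr ⟨Or.inl h, hs⟩⟩
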